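/- Let ν > 10 and r > 10. Then the main part of the Schläfli integral representation of the Bessel function satisfies the uniform decay estimate |∫₀^π e^{i(r sin θ − ν θ)} dθ| ≤ C (1 + |r² − ν²|)^{−1/4} for an absolute constant C independent of r and ν. -/

import Mathlib

/-!
With `φ θ = r sin θ - ν θ` one has `φ' = r cos θ - ν` and `φ'' = -r sin θ ≤ 0` on `[0, π]`, so
van der Corput's first and second derivative tests apply: the integral of `e^{iφ}` over an interval
is at most `3 / μ` if `|φ'| ≥ μ` there, and at most `10 / √c` if `φ'' ≤ -c` there.

Put `u = r^{1/3}`. If `|r² - ν²| ≤ u⁴`, use the second test on `[1/u, π - 1/u]`, where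
`r sin θ ≥ u² / 2`, and the trivial bound on the two end pieces: the integral is `O(1/u)`.
Otherwise put `w = |r² - ν²|^{1/4} > u`. If `ν > r`, then `|φ'| ≥ ν - r ≳ w` everywhere. If `ν < r`,
the stationary point `θ₀ = arccos (ν / r)` has `sin θ₀ = w² / r`; the second test on the window of
half-width `w² / 2r` around `θ₀` gives `O(1/w)`, and outside it `|φ'| ≥ w⁴ / 4r ≥ w / 4`.
-/

open Real intervalIntegral Set

open scoped Complex

lemma norm_integral_le_add_add {f : ℝ → ℂ} (hf : Continuous f) (a b c d : ℝ) :
    ‖∫ x in a..d, f x‖ ≤ ‖∫ x in a..b, f x‖ + ‖∫ x in b..c, f x‖ + ‖∫ x in c..d, f x‖ := by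
  rw [← integral_add_adjacent_intervals (hf.intervalIntegrable a b) (hf.intervalIntegrable b d),
    ← integral_add_adjacent_intervals (hf.intervalIntegrable b c) (hf.intervalIntegrable c d),
    ← add_assoc]
  exact norm_add₃_le

lemma norm_integral_cexp_I_mul_le_sub (φ : ℝ → ℝ) {a b : ℝ} (hab : a ≤ b) :
    ‖∫ x in a..b, cexp (Complex.I * φ x)‖ ≤ b - a := by
  simpa [Complex.norm_exp_I_mul_ofReal, abs_of_nonneg (sub_nonneg.2 hab)] using
    norm_integral_le_of_norm_le_const (a := a) (b := b) (C := 1)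
      (f := fun x => cexp (Complex.I * φ x)) fun x _ => (Complex.norm_exp_I_mul_ofReal _).le

lemma mul_sub_le_sub_of_hasDerivAt_le_neg {f f' : ℝ → ℝ} (hf : ∀ x, HasDerivAt f (f' x) x)
    {a b c : ℝ} (hf' : ∀ x ∈ Icc a b, f' x ≤ -c) {x y : ℝ} (hx : x ∈ Icc a b) (hy : y ∈ Icc a b)
    (hxy : x ≤ y) : c * (y - x) ≤ f x - f y := by
  have := (convex_Icc a b).image_sub_le_mul_sub_of_deriv_le
    (fun z _ => (hf z).continuousAt.continuousWithinAt)
    (fun z _ => (hf z).differentiableAt.differentiableWithinAt)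
    (fun z hz => (hf z).deriv ▸ hf' z (interior_subset hz)) x hx y hy hxy
  linarith

lemma inv_sub_inv_le_of_le_abs {p q μ : ℝ} (hμ : 0 < μ) (hp : μ ≤ |p|) (hq : μ ≤ |q|)
    (hqp : q ≤ p) : q⁻¹ - p⁻¹ ≤ 1 / μ := by
  have hp' := abs_le.1 <| (abs_inv p).trans_le <| (one_div μ) ▸ inv_anti₀ hμ hp
  have hq' := abs_le.1 <| (abs_inv q).trans_le <| (one_div μ) ▸ inv_anti₀ hμ hq
  rcases lt_or_gt_of_ne (abs_pos.1 (hμ.trans_le hq)) with hq0 | hq0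
  · linarith [inv_lt_zero.2 hq0]
  · linarith [inv_pos.2 (hq0.trans_le hqp)]

lemma mul_abs_sub_le_two_mul_abs_of_isMinOn {f f' : ℝ → ℝ} (hf : ∀ x, HasDerivAt f (f' x) x)
    {a b c x₀ : ℝ} (hf' : ∀ x ∈ Icc a b, f' x ≤ -c) (hx₀ : x₀ ∈ Icc a b)
    (hmin : IsMinOn (fun x => |f x|) (Icc a b) x₀) {x : ℝ} (hx : x ∈ Icc a b) :
    c * |x - x₀| ≤ 2 * |f x| := by
  have hslope : c * |x - x₀| ≤ |f x - f x₀| := by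
    rcases le_total x x₀ with h | h
    · rw [abs_of_nonpos (sub_nonpos.2 h), neg_sub]
      exact (mul_sub_le_sub_of_hasDerivAt_le_neg hf hf' hx hx₀ h).trans (le_abs_self _)
    · rw [abs_of_nonneg (sub_nonneg.2 h), abs_sub_comm]
      exact (mul_sub_le_sub_of_hasDerivAt_le_neg hf hf' hx₀ hx h).trans (le_abs_self _)
  have : |f x₀| ≤ |f x| := hmin hx
  linarith [abs_sub (f x) (f x₀)]

section VanDerCorput

variable {φ φ' φ'' : ℝ → ℝ} {a b : ℝ}

theorem integral_cexp_I_mul_eq_of_deriv_ne_zero (hφ : ∀ x, HasDerivAt φ (φ' x) x)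
    (hφ' : ∀ x, HasDerivAt φ' (φ'' x) x) (hφ'' : Continuous φ'')
    (hne : ∀ x ∈ uIcc a b, φ' x ≠ 0) :
    ∫ x in a..b, cexp (Complex.I * φ x) =
      Complex.I * (cexp (Complex.I * φ a) / φ' a - cexp (Complex.I * φ b) / φ' b) -
        Complex.I * ∫ x in a..b, ((φ'' x / φ' x ^ 2 : ℝ) : ℂ) * cexp (Complex.I * φ x) := by
  have hφ'c : Continuous φ' := continuous_iff_continuousAt.2 fun x => (hφ' x).continuousAt
  have hφc : Continuous φ := continuous_iff_continuousAt.2 fun x => (hφ x).continuousAt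
  have hq : ContinuousOn (fun x => -φ'' x / φ' x ^ 2) (uIcc a b) :=
    hφ''.continuousOn.neg.div (hφ'c.pow 2).continuousOn fun x hx => pow_ne_zero 2 (hne x hx)
  -- integrate by parts against `-i / φ'`, whose product with `(e^{iφ})' = i φ' e^{iφ}` is `e^{iφ}`
  have hparts := integral_mul_deriv_eq_deriv_mul
    (u := fun x => -Complex.I * ((φ' x)⁻¹ : ℝ)) (v := fun x => cexp (Complex.I * φ x))
    (fun x hx => ((hφ' x).fun_inv (hne x hx)).ofReal_comp.const_mul _)
    (fun x _ => ((hφ x).ofReal_comp.const_mul Complex.I).cexp)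
    ((continuous_const.mul Complex.continuous_ofReal).comp_continuousOn hq).intervalIntegrable
    ((by fun_prop : Continuous fun x => cexp (Complex.I * φ x) * (Complex.I * φ' x)
      ).intervalIntegrable _ _)
  have hcancel : ∀ x ∈ uIcc a b, -Complex.I * ((φ' x)⁻¹ : ℝ) *
      (cexp (Complex.I * φ x) * (Complex.I * φ' x)) = cexp (Complex.I * φ x) := fun x hx => by
    have : (φ' x : ℂ) ≠ 0 := Complex.ofReal_ne_zero.2 (hne x hx)
    push_cast
    field_simp
    rw [Complex.I_sq]; ring
  rw [integral_congr hcancel] at hparts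
  rw [hparts, ← integral_const_mul]
  push_cast
  simp only [div_eq_mul_inv, neg_mul, mul_neg, integral_neg, mul_assoc]
  ring

theorem norm_integral_cexp_I_mul_le_of_le_abs_deriv (hφ : ∀ x, HasDerivAt φ (φ' x) x)
    (hφ' : ∀ x, HasDerivAt φ' (φ'' x) x) (hφ'' : Continuous φ'') (hab : a ≤ b)
    (hconc : ∀ x ∈ Icc a b, φ'' x ≤ 0) {μ : ℝ} (hμ : 0 < μ)
    (hμφ' : ∀ x ∈ Icc a b, μ ≤ |φ' x|) :
    ‖∫ x in a..b, cexp (Complex.I * φ x)‖ ≤ 3 / μ := by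
  have hne : ∀ x ∈ Icc a b, φ' x ≠ 0 := fun x hx => abs_pos.1 (hμ.trans_le (hμφ' x hx))
  have hφ'c : Continuous φ' := continuous_iff_continuousAt.2 fun x => (hφ' x).continuousAt
  have hq : ContinuousOn (fun x => -φ'' x / φ' x ^ 2) (uIcc a b) := by
    rw [uIcc_of_le hab]
    exact hφ''.continuousOn.neg.div (hφ'c.pow 2).continuousOn fun x hx => pow_ne_zero 2 (hne x hx)
  have hend : ∀ x ∈ Icc a b, ‖cexp (Complex.I * φ x) / φ' x‖ ≤ 1 / μ := fun x hx => by
    rw [norm_div, Complex.norm_exp_I_mul_ofReal, Complex.norm_real, Real.norm_eq_abs]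
    exact one_div_le_one_div_of_le hμ (hμφ' x hx)
  have herr : ‖∫ x in a..b, ((φ'' x / φ' x ^ 2 : ℝ) : ℂ) * cexp (Complex.I * φ x)‖ ≤ 1 / μ := calc
    _ ≤ ∫ x in a..b, -φ'' x / φ' x ^ 2 := by
      refine norm_integral_le_of_norm_le hab (Filter.Eventually.of_forall fun x hx => ?_)
        hq.intervalIntegrable
      rw [norm_mul, Complex.norm_exp_I_mul_ofReal, mul_one, Complex.norm_real, Real.norm_eq_abs,
        abs_div, abs_of_nonpos (hconc x (Ioc_subset_Icc_self hx)), abs_of_nonneg (sq_nonneg _)]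
    _ = (φ' b)⁻¹ - (φ' a)⁻¹ := integral_eq_sub_of_hasDerivAt
      (fun x hx => (hφ' x).fun_inv (hne x (uIcc_of_le hab ▸ hx))) hq.intervalIntegrable
    _ ≤ 1 / μ := by
      refine inv_sub_inv_le_of_le_abs hμ (hμφ' a (left_mem_Icc.2 hab))
        (hμφ' b (right_mem_Icc.2 hab)) ?_
      linarith [mul_sub_le_sub_of_hasDerivAt_le_neg hφ' (c := 0) (by simpa using hconc)
        (left_mem_Icc.2 hab) (right_mem_Icc.2 hab) hab]
  rw [integral_cexp_I_mul_eq_of_deriv_ne_zero hφ hφ' hφ'' fun x hx => hne x (uIcc_of_le hab ▸ hx),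
    ← mul_sub, norm_mul, Complex.norm_I, one_mul]
  calc _ ≤ 1 / μ + 1 / μ + 1 / μ :=
        norm_sub_le_of_le (norm_sub_le_of_le (hend a (left_mem_Icc.2 hab))
          (hend b (right_mem_Icc.2 hab))) herr
    _ = 3 / μ := by ring

theorem norm_integral_cexp_I_mul_le_of_deriv2_le_neg (hφ : ∀ x, HasDerivAt φ (φ' x) x)
    (hφ' : ∀ x, HasDerivAt φ' (φ'' x) x) (hφ'' : Continuous φ'') (hab : a ≤ b) {c : ℝ}
    (hc : 0 < c) (hφ''c : ∀ x ∈ Icc a b, φ'' x ≤ -c) :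
    ‖∫ x in a..b, cexp (Complex.I * φ x)‖ ≤ 10 / √c := by
  have hφ'c : Continuous φ' := continuous_iff_continuousAt.2 fun x => (hφ' x).continuousAt
  have hφc : Continuous φ := continuous_iff_continuousAt.2 fun x => (hφ x).continuousAt
  obtain ⟨x₀, hx₀, hmin⟩ := isCompact_Icc.exists_isMinOn (nonempty_Icc.2 hab)
    (continuous_abs.comp hφ'c).continuousOn
  -- cut out the window of half-width `2 / √c` around `x₀`; outside it `|φ'| ≥ √c`
  set μ := √c
  have hμ : 0 < μ := sqrt_pos.2 hc
  have h2μ : 0 < 2 / μ := div_pos two_pos hμ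
  have hfar : ∀ x ∈ Icc a b, x ≤ x₀ - 2 / μ ∨ x₀ + 2 / μ ≤ x → μ ≤ |φ' x| := fun x hx h => by
    have hdist : 2 / μ ≤ |x - x₀| := by
      rcases h with h | h
      · exact le_abs.2 (Or.inr (by linarith))
      · exact le_abs.2 (Or.inl (by linarith))
    have : c * (2 / μ) = 2 * μ := by
      rw [show c = μ * μ from (mul_self_sqrt hc.le).symm]; field_simp
    linarith [mul_le_mul_of_nonneg_left hdist hc.le,
      mul_abs_sub_le_two_mul_abs_of_isMinOn hφ' hφ''c hx₀ hmin hx]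
  have hconc : ∀ x ∈ Icc a b, φ'' x ≤ 0 := fun x hx => (hφ''c x hx).trans (by linarith)
  set α := max a (x₀ - 2 / μ)
  set β := min b (x₀ + 2 / μ)
  have hleft : ‖∫ x in a..α, cexp (Complex.I * φ x)‖ ≤ 3 / μ := by
    rcases le_or_gt a (x₀ - 2 / μ) with h | h
    · rw [show α = x₀ - 2 / μ from max_eq_right h]
      exact norm_integral_cexp_I_mul_le_of_le_abs_deriv hφ hφ' hφ'' h
        (fun x hx => hconc x ⟨hx.1, by linarith [hx.2, hx₀.2]⟩) hμ
        fun x hx => hfar x ⟨hx.1, by linarith [hx.2, hx₀.2]⟩ (Or.inl hx.2)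
    · rw [show α = a from max_eq_left h.le, integral_same, norm_zero]; positivity
  have hright : ‖∫ x in β..b, cexp (Complex.I * φ x)‖ ≤ 3 / μ := by
    rcases le_or_gt (x₀ + 2 / μ) b with h | h
    · rw [show β = x₀ + 2 / μ from min_eq_right h]
      exact norm_integral_cexp_I_mul_le_of_le_abs_deriv hφ hφ' hφ'' h
        (fun x hx => hconc x ⟨by linarith [hx.1, hx₀.1], hx.2⟩) hμ
        fun x hx => hfar x ⟨by linarith [hx.1, hx₀.1], hx.2⟩ (Or.inr hx.1)
    · rw [show β = b from min_eq_left h.le, integral_same, norm_zero]; positivity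
  have hmiddle : ‖∫ x in α..β, cexp (Complex.I * φ x)‖ ≤ 4 / μ := by
    have hα : x₀ - 2 / μ ≤ α := le_max_right _ _
    have hβ : β ≤ x₀ + 2 / μ := min_le_right _ _
    refine (norm_integral_cexp_I_mul_le_sub φ ?_).trans
      (by linarith [show 4 / μ = 2 * (2 / μ) by ring])
    exact max_le (le_min hab (by linarith [hx₀.1])) (le_min (by linarith [hx₀.2]) (by linarith))
  calc ‖∫ x in a..b, cexp (Complex.I * φ x)‖ ≤ 3 / μ + 4 / μ + 3 / μ :=
        (norm_integral_le_add_add (by fun_prop) a α β b).trans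
          (add_le_add_three hleft hmiddle hright)
    _ = 10 / μ := by ring

end VanDerCorput

lemma div_two_le_sin {δ θ : ℝ} (hδ : 0 ≤ δ) (hθ : θ ∈ Icc δ (π - δ)) : δ / 2 ≤ sin θ := by
  have hπ : 1 / 2 ≤ 2 / π := by
    rw [div_le_div_iff₀ two_pos pi_pos]; linarith [pi_le_four]
  have key : ∀ t, δ ≤ t → t ≤ π / 2 → δ / 2 ≤ sin t := fun t ht ht' => by
    nlinarith [mul_le_sin (hδ.trans ht) ht']
  rcases le_total θ (π / 2) with h | h
  · exact key θ hθ.1 h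
  · rw [← sin_pi_sub]; exact key (π - θ) (by linarith [hθ.2]) (by linarith)

lemma mul_le_abs_cos_sub_cos {θ₀ h m θ : ℝ} (hθ₀ : θ₀ ∈ Icc 0 π) (hh : 0 ≤ h)
    (hsin : ∀ t ∈ Icc (θ₀ - h) (θ₀ + h), m ≤ sin t) (hθ : θ ∈ Icc 0 π) (hfar : h ≤ |θ - θ₀|) :
    m * h ≤ |cos θ - cos θ₀| := by
  have hdrop {x y : ℝ} (hx : x ∈ Icc (θ₀ - h) (θ₀ + h)) (hy : y ∈ Icc (θ₀ - h) (θ₀ + h))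
      (hxy : x ≤ y) : m * (y - x) ≤ cos x - cos y :=
    mul_sub_le_sub_of_hasDerivAt_le_neg hasDerivAt_cos (fun t ht => neg_le_neg (hsin t ht))
      hx hy hxy
  rcases le_abs.1 hfar with hθ' | hθ'
  · have h1 := cos_le_cos_of_nonneg_of_le_pi (by linarith [hθ₀.1]) hθ.2 (by linarith : θ₀ + h ≤ θ)
    have h2 := hdrop (x := θ₀) ⟨by linarith, by linarith⟩ ⟨by linarith, le_rfl⟩ (by linarith)
    rw [abs_sub_comm]
    exact le_abs.2 (Or.inl (by linarith))
  · have h1 := cos_le_cos_of_nonneg_of_le_pi hθ.1 (by linarith [hθ₀.2]) (by linarith : θ ≤ θ₀ - h)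
    have h2 := hdrop (y := θ₀) ⟨le_rfl, by linarith⟩ ⟨by linarith, by linarith⟩ (by linarith)
    exact le_abs.2 (Or.inl (by linarith))

lemma hasDerivAt_schlafli_phase (r ν θ : ℝ) :
    HasDerivAt (fun θ => r * sin θ - ν * θ) (r * cos θ - ν) θ := by
  simpa using ((hasDerivAt_sin θ).const_mul r).fun_sub ((hasDerivAt_id' θ).const_mul ν)

lemma hasDerivAt_schlafli_phase_deriv (r ν θ : ℝ) :
    HasDerivAt (fun θ => r * cos θ - ν) (-(r * sin θ)) θ := by
  simpa using ((hasDerivAt_cos θ).const_mul r).sub_const ν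

section Schlafli

variable {r ν a b : ℝ}

lemma norm_integral_schlafli_le_of_le_abs_deriv (hr : 0 ≤ r) (ha : 0 ≤ a) (hab : a ≤ b)
    (hb : b ≤ π) {μ : ℝ} (hμ : 0 < μ) (h : ∀ θ ∈ Icc a b, μ ≤ |r * cos θ - ν|) :
    ‖∫ θ in a..b, cexp (Complex.I * (r * sin θ - ν * θ : ℝ))‖ ≤ 3 / μ :=
  norm_integral_cexp_I_mul_le_of_le_abs_deriv (hasDerivAt_schlafli_phase r ν)
    (hasDerivAt_schlafli_phase_deriv r ν) (by fun_prop) hab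
    (fun θ hθ => neg_nonpos.2 <| mul_nonneg hr <|
      sin_nonneg_of_nonneg_of_le_pi (ha.trans hθ.1) (hθ.2.trans hb)) hμ h

lemma norm_integral_schlafli_le_of_le_sin (hab : a ≤ b) {m : ℝ} (hm : 0 < m)
    (h : ∀ θ ∈ Icc a b, m ^ 2 / 4 ≤ r * sin θ) :
    ‖∫ θ in a..b, cexp (Complex.I * (r * sin θ - ν * θ : ℝ))‖ ≤ 20 / m := by
  have := norm_integral_cexp_I_mul_le_of_deriv2_le_neg (hasDerivAt_schlafli_phase r ν)
    (hasDerivAt_schlafli_phase_deriv r ν) (by fun_prop) hab (by positivity)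
    fun θ hθ => neg_le_neg (h θ hθ)
  rwa [show m ^ 2 / 4 = (m / 2) ^ 2 by ring, sqrt_sq (by positivity),
    show 10 / (m / 2) = 20 / m by field_simp; ring] at this

lemma norm_schlafli_le_of_cube {u : ℝ} (hu : 2 ≤ u) :
    ‖∫ θ in (0 : ℝ)..π, cexp (Complex.I * (u ^ 3 * sin θ - ν * θ : ℝ))‖ ≤ 22 / u := by
  have hu0 : 0 < u := by linarith
  set δ := 1 / u with hδ_def
  have hδ : 0 < δ := by positivity
  have hδπ : δ ≤ π - δ := by
    have : δ ≤ 1 / 2 := by rw [div_le_div_iff₀ hu0 two_pos]; linarith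
    linarith [pi_gt_three]
  have hmiddle : ‖∫ θ in δ..π - δ, cexp (Complex.I * (u ^ 3 * sin θ - ν * θ : ℝ))‖ ≤ 20 / u :=
    norm_integral_schlafli_le_of_le_sin hδπ hu0 fun θ hθ => by
      have := mul_le_mul_of_nonneg_left (div_two_le_sin hδ.le hθ) (by positivity : 0 ≤ u ^ 3)
      have hu3 : u ^ 3 * (δ / 2) = u ^ 2 / 2 := by rw [hδ_def]; field_simp
      nlinarith
  have hends := fun a b (hab : a ≤ b) =>
    norm_integral_cexp_I_mul_le_sub (fun θ => u ^ 3 * sin θ - ν * θ) hab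
  calc _ ≤ δ + 20 / u + δ := (norm_integral_le_add_add (by fun_prop) 0 δ (π - δ) π).trans
        (add_le_add_three (by simpa only [sub_zero] using hends 0 δ hδ.le) hmiddle
          (by simpa only [sub_sub_cancel] using hends (π - δ) π (sub_le_self π hδ.le)))
    _ = 22 / u := by rw [hδ_def]; field_simp; ring

lemma norm_schlafli_le_of_lt (hr : 0 ≤ r) (hrν : r < ν) :
    ‖∫ θ in (0 : ℝ)..π, cexp (Complex.I * (r * sin θ - ν * θ : ℝ))‖ ≤ 3 / (ν - r) :=
  norm_integral_schlafli_le_of_le_abs_deriv hr le_rfl pi_pos.le le_rfl (sub_pos.2 hrν)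
    fun θ _ => by
      have := mul_le_of_le_one_right hr (cos_le_one θ)
      rw [abs_of_neg (by linarith)]; linarith

lemma exists_schlafli_stationary_point {w : ℝ} (hν : 0 < ν) (hνr : ν < r)
    (hw4 : w ^ 4 = r ^ 2 - ν ^ 2) : ∃ θ₀ ∈ Icc 0 (π / 2), r * cos θ₀ = ν ∧ sin θ₀ = w ^ 2 / r := by
  have hr : 0 < r := hν.trans hνr
  refine ⟨arccos (ν / r), ⟨arccos_nonneg _, arccos_le_pi_div_two.2 (div_pos hν hr).le⟩, ?_, ?_⟩
  · rw [cos_arccos (by linarith [div_pos hν hr]) ((div_le_one hr).2 hνr.le)]; field_simp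
  · rw [sin_arccos, show 1 - (ν / r) ^ 2 = (w ^ 2 / r) ^ 2 by field_simp; linarith,
      sqrt_sq (by positivity)]

lemma norm_schlafli_le_of_gt {w : ℝ} (hν : 0 < ν) (hνr : ν < r) (hw : 0 < w)
    (hw4 : w ^ 4 = r ^ 2 - ν ^ 2) :
    ‖∫ θ in (0 : ℝ)..π, cexp (Complex.I * (r * sin θ - ν * θ : ℝ))‖ ≤ 24 * r / w ^ 4 + 20 / w := by
  have hr : 0 < r := hν.trans hνr
  obtain ⟨θ₀, ⟨hθ₀, hθ₀π⟩, hcos, hsin⟩ := exists_schlafli_stationary_point hν hνr hw4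
  set s := w ^ 2 / r with hs_def
  have hs : 0 < s := by positivity
  have hsθ₀ : s ≤ θ₀ := hsin ▸ sin_le hθ₀
  have hs1 : s ≤ 1 := hsin ▸ sin_le_one θ₀
  have hπ : 3 < π := pi_gt_three
  have hnear : ∀ t ∈ Icc (θ₀ - s / 2) (θ₀ + s / 2), s / 2 ≤ sin t := fun t ht => by
    have := (abs_le.1 (abs_sin_sub_sin_le t θ₀)).1
    have := neg_abs_le (t - θ₀)
    have : |t - θ₀| ≤ s / 2 := abs_le.2 ⟨by linarith [ht.1], by linarith [ht.2]⟩
    linarith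
  set μ := r * (s / 2 * (s / 2)) with hμ_def
  have hμ : 0 < μ := by positivity
  have hfar : ∀ θ ∈ Icc 0 π, s / 2 ≤ |θ - θ₀| → μ ≤ |r * cos θ - ν| := fun θ hθ h => by
    rw [← hcos, ← mul_sub, abs_mul, abs_of_pos hr]
    exact mul_le_mul_of_nonneg_left (mul_le_abs_cos_sub_cos ⟨hθ₀, by linarith⟩
      (by positivity) hnear hθ h) hr.le
  have hleft : ‖∫ θ in (0 : ℝ)..θ₀ - s / 2, cexp (Complex.I * (r * sin θ - ν * θ : ℝ))‖ ≤ 3 / μ :=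
    norm_integral_schlafli_le_of_le_abs_deriv hr.le le_rfl (by linarith) (by linarith) hμ
      fun θ hθ => hfar θ ⟨hθ.1, by linarith [hθ.2]⟩ (le_abs.2 (Or.inr (by linarith [hθ.2])))
  have hright : ‖∫ θ in θ₀ + s / 2..π, cexp (Complex.I * (r * sin θ - ν * θ : ℝ))‖ ≤ 3 / μ :=
    norm_integral_schlafli_le_of_le_abs_deriv hr.le (by linarith) (by linarith) le_rfl hμ
      fun θ hθ => hfar θ ⟨by linarith [hθ.1], hθ.2⟩ (le_abs.2 (Or.inl (by linarith [hθ.1])))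
  have hmiddle : ‖∫ θ in θ₀ - s / 2..θ₀ + s / 2,
      cexp (Complex.I * (r * sin θ - ν * θ : ℝ))‖ ≤ 20 / w :=
    norm_integral_schlafli_le_of_le_sin (by linarith) hw fun t ht => by
      have hrs : r * (s / 2) = w ^ 2 / 2 := by rw [hs_def]; field_simp
      nlinarith [mul_le_mul_of_nonneg_left (hnear t ht) hr.le]
  have hμw : 3 / μ = 12 * r / w ^ 4 := by rw [hμ_def, hs_def]; field_simp; ring
  calc _ ≤ 3 / μ + 20 / w + 3 / μ := (norm_integral_le_add_add (by fun_prop) _ _ _ _).trans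
        (add_le_add_three hleft hmiddle hright)
    _ = 24 * r / w ^ 4 + 20 / w := by rw [hμw]; ring

lemma norm_schlafli_le_of_large_gap {u w : ℝ} (hu : 2 ≤ u) (hν : 0 < ν) (huw : u ≤ w)
    (hw4 : w ^ 4 = |(u ^ 3) ^ 2 - ν ^ 2|) :
    ‖∫ θ in (0 : ℝ)..π, cexp (Complex.I * (u ^ 3 * sin θ - ν * θ : ℝ))‖ ≤ 50 / w := by
  have hw : 0 < w := by linarith
  have hu3w : u ^ 3 ≤ w ^ 3 := pow_le_pow_left₀ (by linarith) huw 3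
  have hu3 : 0 < u ^ 3 := by positivity
  rcases lt_trichotomy (u ^ 3) ν with h | h | h
  · set d := ν - u ^ 3
    have hd : 0 < d := sub_pos.2 h
    have hw4' : w ^ 4 = d * d + 2 * d * u ^ 3 := by
      rw [hw4, abs_of_neg (by nlinarith)]; ring
    refine (norm_schlafli_le_of_lt hu3.le h).trans ?_
    rw [div_le_div_iff₀ hd hw]
    -- `w⁴ = d (d + 2u³) ≤ d (d + 2w³)` is impossible for `d < 3w / 50` and `w ≥ 2`
    by_contra! hlt
    have h1 : d * d ≤ (3 * w / 50) * (3 * w / 50) :=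
      mul_le_mul (by linarith) (by linarith) hd.le (by positivity)
    have h2 : d * u ^ 3 ≤ (3 * w / 50) * w ^ 3 :=
      mul_le_mul (by linarith) hu3w hu3.le (by positivity)
    nlinarith [sq_nonneg w, mul_le_mul huw huw (by linarith) hw.le]
  · rw [h, sub_self, abs_zero] at hw4
    exact absurd hw4 (by positivity)
  · have hw4' : w ^ 4 = (u ^ 3) ^ 2 - ν ^ 2 := by rw [hw4, abs_of_pos (by nlinarith)]
    refine (norm_schlafli_le_of_gt hν h hw hw4').trans ?_
    have : 24 * u ^ 3 / w ^ 4 ≤ 24 / w := by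
      rw [div_le_div_iff₀ (by positivity) hw]; nlinarith [pow_pos hw 4]
    linarith [show 24 / w + 20 / w ≤ 50 / w by rw [← add_div]; gcongr; norm_num]

end Schlafli

lemma div_le_mul_rpow_neg_quarter {c Λ Y : ℝ} (hc : 0 ≤ c) (hΛ : 0 < Λ) (hY : 0 < Y)
    (hΛY : Λ ≤ Y ^ 4) : c / Y ≤ c * Λ ^ (-(1 : ℝ) / 4) := by
  have : Y⁻¹ ≤ Λ ^ (-(1 : ℝ) / 4) := calc
    Y⁻¹ = (Y ^ 4) ^ (-(1 : ℝ) / 4) := by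
      rw [← rpow_natCast, ← rpow_mul hY.le]; norm_num [rpow_neg_one]
    _ ≤ Λ ^ (-(1 : ℝ) / 4) := rpow_le_rpow_of_nonpos hΛ hΛY (by norm_num)
  rw [div_eq_mul_inv]
  exact mul_le_mul_of_nonneg_left this hc

/-- Uniform decay estimate for the main part of the Schläfli integral
representation of the Bessel function. -/
theorem schlafli_main_uniform_decay :
    ∃ C > 0, ∀ r ν : ℝ, ν > 10 → r > 10 →
      ‖∫ θ in (0 : ℝ)..π, Complex.exp (Complex.I * (r * Real.sin θ - ν * θ))‖ ≤
        C * (1 + |r ^ 2 - ν ^ 2|) ^ (-(1 : ℝ) / 4) := by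
  refine ⟨100, by norm_num, fun r ν hν hr => ?_⟩
  obtain ⟨u, hu, rfl⟩ : ∃ u, 0 < u ∧ u ^ 3 = r :=
    ⟨r ^ ((3 : ℕ)⁻¹ : ℝ), by positivity, rpow_inv_natCast_pow (by linarith) three_ne_zero⟩
  have hu2 : 2 ≤ u := by nlinarith [sq_nonneg (u - 2), sq_nonneg u]
  set D := |(u ^ 3) ^ 2 - ν ^ 2|
  obtain ⟨w, hw, hDw, hI⟩ : ∃ w > 0, 1 + D ≤ (2 * w) ^ 4 ∧
      ‖∫ θ in (0 : ℝ)..π, cexp (Complex.I * (u ^ 3 * sin θ - ν * θ : ℝ))‖ ≤ 50 / w := by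
    rcases le_or_gt D (u ^ 4) with hD | hD
    · exact ⟨u, hu, by nlinarith, (norm_schlafli_le_of_cube hu2).trans (by gcongr; norm_num)⟩
    · obtain ⟨w, hw, hw4⟩ : ∃ w, 0 < w ∧ w ^ 4 = D :=
        ⟨D ^ ((4 : ℕ)⁻¹ : ℝ), rpow_pos_of_pos ((pow_pos hu 4).trans hD) _,
          rpow_inv_natCast_pow (abs_nonneg _) four_ne_zero⟩
      have huw : u ≤ w := (pow_le_pow_iff_left₀ hu.le hw.le four_ne_zero).1 (hw4 ▸ hD.le)
      exact ⟨w, hw, by nlinarith [pow_le_pow_left₀ (by norm_num) hu2 4],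
        norm_schlafli_le_of_large_gap hu2 (by linarith) huw hw4⟩
  simp only [Complex.ofReal_sub, Complex.ofReal_mul] at hI
  calc _ ≤ 100 / (2 * w) := hI.trans_eq (by field_simp; norm_num)
    _ ≤ 100 * (1 + D) ^ (-(1 : ℝ) / 4) :=
      div_le_mul_rpow_neg_quarter (by norm_num) (by positivity) (by positivity) hDw
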